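/- arXiv:2503.06153 — 3 statements merged into one kernel-verified Lean document; each statement's English description precedes it below -/
import Mathlib

section
/- Let χ be a nonzero integer, let n₀ be an integer with n₀ ≥ |χ| + 1, and let h₁, h₂ be positive rational numbers with h = h₁ + h₂. Then min(χ,0)/h₂ < χ/h and (max(χ,0) + 1 − n₀)/h₁ < χ/h. -/
/-- Slope inequalities for the kernels of restriction maps on a nodal curve:
with `n₀ ≥ |χ| + 1` and `h = h₁ + h₂`, both `min(χ,0)/h₂` and
`(max(χ,0) + 1 − n₀)/h₁` are strictly smaller than `χ/h`. -/
theorem stmt_1 (χ : ℤ) (hχ : χ ≠ 0) (n₀ : ℤ) (hn₀ : n₀ ≥ |χ| + 1)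
    (h₁ h₂ h : ℚ) (hh₁ : 0 < h₁) (hh₂ : 0 < h₂) (hh : h = h₁ + h₂) :
    ((min χ 0 : ℤ) : ℚ) / h₂ < (χ : ℚ) / h ∧
      ((max χ 0 + 1 - n₀ : ℤ) : ℚ) / h₁ < (χ : ℚ) / h := by
  have hh0 : 0 < h := by rw [hh]; linarith
  rcases lt_or_gt_of_ne hχ with hneg | hpos
  · have hmin : min χ 0 = χ := min_eq_left hneg.le
    have hmax : max χ 0 = 0 := max_eq_right hneg.le
    have habs : |χ| = -χ := abs_of_neg hneg
    have hχq : (χ : ℚ) < 0 := by exact_mod_cast hneg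
    constructor
    · rw [hmin]
      rw [div_lt_div_iff₀ hh₂ hh0]
      have : h₂ < h := by rw [hh]; linarith
      nlinarith
    · rw [hmax]
      have h1 : ((0 + 1 - n₀ : ℤ) : ℚ) ≤ (χ : ℚ) := by
        have : (0 + 1 - n₀ : ℤ) ≤ χ := by omega
        exact_mod_cast this
      have h2 : (χ : ℚ) / h₁ < (χ : ℚ) / h := by
        rw [div_lt_div_iff₀ hh₁ hh0]
        have : h₁ < h := by rw [hh]; linarith
        nlinarith
      calc ((0 + 1 - n₀ : ℤ) : ℚ) / h₁ ≤ (χ : ℚ) / h₁ := by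
            gcongr
        _ < (χ : ℚ) / h := h2
  · have hmin : min χ 0 = 0 := min_eq_right hpos.le
    have hmax : max χ 0 = χ := max_eq_left hpos.le
    have habs : |χ| = χ := abs_of_pos hpos
    have hχq : (0 : ℚ) < χ := by exact_mod_cast hpos
    constructor
    · rw [hmin]
      simpa using div_pos hχq hh0
    · have h1 : ((max χ 0 + 1 - n₀ : ℤ) : ℚ) ≤ 0 := by
        have : (max χ 0 + 1 - n₀ : ℤ) ≤ 0 := by omega
        exact_mod_cast this
      calc ((max χ 0 + 1 - n₀ : ℤ) : ℚ) / h₁ ≤ 0 := div_nonpos_of_nonpos_of_nonneg h1 hh₁.le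
        _ < (χ : ℚ) / h := div_pos hχq hh0
end

section
/- Let ρ ≥ 1 be an integer, χ a nonzero rational number, d₀ a rational number, d₁,…,d_ρ rational numbers with d₁ ≠ 0, p a rational number, and (b_{ik})_{1≤i,k≤ρ} a rational matrix. Set a_j = Σ_{k=1}^{ρ} d_k b_{kj} for j = 1,…,ρ, and let n₂,…,n_ρ be rational numbers. Define the (ρ+1) × (ρ+1) matrix M by: M₀₀ = d₀; M_{i0} = 0 for 1 ≤ i ≤ ρ; M_{0j} arbitrary for j ≥ 1; M_{1j} = p·a_j for 1 ≤ j ≤ ρ; and M_{ij} = −χ·b_{ij} + n_i·a_j for 2 ≤ i ≤ ρ and 1 ≤ j ≤ ρ. Then det M = (−χ)^{ρ−1} · d₀ · d₁ · p · det(b_{ik}). -/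
/-! Expanding along the first column leaves the lower-right block, whose rows are `p • a` and
`-χ • bᵢ + nᵢ • a` with `a = ∑ₖ dₖ • bₖ`. Subtracting multiples of the row `a` removes the
rank-one part, pulling out the scalars leaves `b` with one row replaced by `∑ₖ dₖ • bₖ`, and by
multilinearity that matrix has determinant `d₁ · det b`. -/

open Matrix

namespace Matrix

variable {n R : Type*} [Fintype n] [DecidableEq n] [CommRing R]

theorem det_updateRow_add_vecMulVec (A : Matrix n n R) (k : n) (v w : n → R) :
    ((A + vecMulVec v w).updateRow k w).det = (A.updateRow k w).det := by
  -- once row `k` is `w`, adding `vᵢ • w` to the other rows is a row operation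
  refine det_eq_of_forall_row_eq_smul_add_const (Function.update v k 0) k (by simp) fun i j => ?_
  rcases eq_or_ne i k with rfl | hik
  · simp
  · simp [hik, vecMulVec_apply]

theorem det_updateRow_smul_add_vecMulVec (A : Matrix n n R) (k : n) (c s : R) (v d : n → R) :
    ((c • A + vecMulVec v (∑ i, d i • A i)).updateRow k (s • ∑ i, d i • A i)).det =
      s * c ^ (Fintype.card n - 1) * d k * A.det := by
  rw [det_updateRow_smul, det_updateRow_add_vecMulVec, det_updateRow_smul_left,
    det_updateRow_sum, smul_eq_mul, mul_assoc, mul_assoc]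

theorem det_succ_of_col_zero_eq_zero {m : ℕ} (A : Matrix (Fin (m + 1)) (Fin (m + 1)) R)
    (hA : ∀ i : Fin m, A i.succ 0 = 0) : A.det = A 0 0 * (A.submatrix Fin.succ Fin.succ).det := by
  rw [det_succ_column_zero, Fin.sum_univ_succ]
  simp [hA]

end Matrix

theorem stmt_2_general (ρ : ℕ) (hρ : 1 ≤ ρ) (χ : ℚ)
    (d₀ : ℚ) (d : Fin ρ → ℚ) (p : ℚ)
    (b : Matrix (Fin ρ) (Fin ρ) ℚ) (n : Fin ρ → ℚ) (a : Fin ρ → ℚ)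
    (ha : ∀ j : Fin ρ, a j = ∑ k : Fin ρ, d k * b k j)
    (M : Matrix (Fin (ρ + 1)) (Fin (ρ + 1)) ℚ)
    (hM00 : M 0 0 = d₀)
    (hMi0 : ∀ i : Fin ρ, M i.succ 0 = 0)
    (hM1j : ∀ j : Fin ρ, M (Fin.succ ⟨0, hρ⟩) j.succ = p * a j)
    (hMij : ∀ i : Fin ρ, i ≠ ⟨0, hρ⟩ →
      ∀ j : Fin ρ, M i.succ j.succ = -χ * b i j + n i * a j) :
    M.det = (-χ) ^ (ρ - 1) * d₀ * d ⟨0, hρ⟩ * p * b.det := by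
  have ha_rows : a = ∑ k, d k • b k := by
    ext j
    simp [ha]
  have hN : M.submatrix Fin.succ Fin.succ =
      ((-χ) • b + vecMulVec n a).updateRow ⟨0, hρ⟩ (p • a) := by
    ext i j
    rcases eq_or_ne i ⟨0, hρ⟩ with rfl | hi
    · simpa using hM1j j
    · simp [updateRow_ne hi, hMij i hi, vecMulVec_apply]
  rw [det_succ_of_col_zero_eq_zero M hMi0, hN, ha_rows, det_updateRow_smul_add_vecMulVec,
    Fintype.card_fin, hM00]
  ring

/-- Determinant identity for the intersection matrix of determinant line
bundles with testing curves: the `(ρ+1) × (ρ+1)` matrix `M` with first column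
`(d₀, 0, …, 0)ᵀ`, second row of the lower block `p·a`, and remaining rows
`−χ·bᵢ + nᵢ·a`, where `a_j = Σ_k d_k b_{kj}`, has determinant
`(−χ)^{ρ−1} · d₀ · d₁ · p · det b`. -/
theorem stmt_2 (ρ : ℕ) (hρ : 1 ≤ ρ) (χ : ℚ) (hχ : χ ≠ 0)
    (d₀ : ℚ) (d : Fin ρ → ℚ) (hd₁ : d ⟨0, hρ⟩ ≠ 0) (p : ℚ)
    (b : Matrix (Fin ρ) (Fin ρ) ℚ) (n : Fin ρ → ℚ) (a : Fin ρ → ℚ)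
    (ha : ∀ j : Fin ρ, a j = ∑ k : Fin ρ, d k * b k j)
    (M : Matrix (Fin (ρ + 1)) (Fin (ρ + 1)) ℚ)
    (hM00 : M 0 0 = d₀)
    (hMi0 : ∀ i : Fin ρ, M i.succ 0 = 0)
    (hM1j : ∀ j : Fin ρ, M (Fin.succ ⟨0, hρ⟩) j.succ = p * a j)
    (hMij : ∀ i : Fin ρ, i ≠ ⟨0, hρ⟩ →
      ∀ j : Fin ρ, M i.succ j.succ = -χ * b i j + n i * a j) :
    M.det = (-χ) ^ (ρ - 1) * d₀ * d ⟨0, hρ⟩ * p * b.det :=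
  stmt_2_general ρ hρ χ d₀ d p b n a ha M hM00 hMi0 hM1j hMij
end

section
/- Let d₀ ≥ 1 be an integer, p > 0 a rational number, and a₁, …, a_ρ rational numbers not all zero, with d₁ ≠ 0 where β = Σ d_i L_i. Suppose rational numbers c₀, c₁, …, c_ρ satisfy: c₀·d₀ + Σ_{j≥1} c_j·m_j = 0 for some rationals m_j; Σ_{j≥1} c_j·p·a_j = 0; and for each i = 2,…,ρ, Σ_{j≥1} c_j·(−χ·b_{ij} + n_i·a_j) = 0, where χ ≠ 0 and the Gram matrix (b_{ij})_{1≤i,j≤ρ} is invertible with a_j = Σ_k d_k b_{kj}. Then c₀ = c₁ = ⋯ = c_ρ = 0. -/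
/-- Linear independence of the determinant line bundle classes: a putative
relation `(c₀, c₁, …, c_ρ)` orthogonal to the intersection numbers with the
moving-support curve, the fixed-smooth-support curve, and the nodal-support
curves must vanish, provided `d₀ ≥ 1`, `p > 0`, `χ ≠ 0`, `d₁ ≠ 0` and the
Gram matrix `b` is invertible. -/
theorem stmt_16 (ρ : ℕ) (hρ : 1 ≤ ρ) (d₀ : ℤ) (hd₀ : 1 ≤ d₀)
    (p : ℚ) (hp : 0 < p) (χ : ℚ) (hχ : χ ≠ 0)
    (b : Matrix (Fin ρ) (Fin ρ) ℚ) (hb : IsUnit b.det)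
    (d : Fin ρ → ℚ) (hd₁ : d ⟨0, hρ⟩ ≠ 0)
    (a : Fin ρ → ℚ) (ha : ∀ j, a j = ∑ k : Fin ρ, d k * b k j)
    (n m : Fin ρ → ℚ) (c : Fin (ρ + 1) → ℚ)
    (h1 : c 0 * (d₀ : ℚ) + ∑ j : Fin ρ, c j.succ * m j = 0)
    (h2 : ∑ j : Fin ρ, c j.succ * (p * a j) = 0)
    (h3 : ∀ i : Fin ρ, i ≠ ⟨0, hρ⟩ →
      ∑ j : Fin ρ, c j.succ * (-χ * b i j + n i * a j) = 0) :
    ∀ i, c i = 0 := by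
  -- From h2: ∑ c_{j+1} a_j = 0
  have hA : ∑ j : Fin ρ, c j.succ * a j = 0 := by
    have h2' : p * ∑ j : Fin ρ, c j.succ * a j = 0 := by
      rw [Finset.mul_sum]
      simpa [mul_left_comm, mul_comm, mul_assoc] using h2
    exact (mul_eq_zero.1 h2').resolve_left hp.ne'
  -- For i ≠ 0: ∑ c_{j+1} b i j = 0
  have hrow : ∀ i : Fin ρ, i ≠ ⟨0, hρ⟩ → ∑ j : Fin ρ, c j.succ * b i j = 0 := by
    intro i hi
    have h := h3 i hi
    have : (-χ) * ∑ j : Fin ρ, c j.succ * b i j + n i * ∑ j : Fin ρ, c j.succ * a j = 0 := by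
      rw [Finset.mul_sum, Finset.mul_sum, ← Finset.sum_add_distrib]
      convert h using 2 with j
      ring
    rw [hA, mul_zero, add_zero] at this
    have := mul_eq_zero.1 this
    rcases this with h' | h'
    · exact absurd (neg_eq_zero.1 h') hχ
    · exact h'
  -- Row 0 as well, using hA and ha
  have hrow0 : ∑ j : Fin ρ, c j.succ * b ⟨0, hρ⟩ j = 0 := by
    have : ∑ k : Fin ρ, d k * ∑ j : Fin ρ, c j.succ * b k j = 0 := by
      rw [← hA]
      simp_rw [ha, Finset.mul_sum]
      rw [Finset.sum_comm]
      apply Finset.sum_congr rfl; intro k _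
      apply Finset.sum_congr rfl; intro j _
      ring
    rw [Finset.sum_eq_single (⟨0, hρ⟩ : Fin ρ)] at this
    · rcases mul_eq_zero.1 this with h' | h'
      · exact absurd h' hd₁
      · exact h'
    · intro k _ hk
      rw [hrow k hk, mul_zero]
    · intro h; exact absurd (Finset.mem_univ _) h
  have hall : ∀ i : Fin ρ, ∑ j : Fin ρ, c j.succ * b i j = 0 := by
    intro i
    by_cases hi : i = ⟨0, hρ⟩
    · rw [hi]; exact hrow0
    · exact hrow i hi
  -- b *ᵥ v = 0 with v j = c j.succ
  have hv : (fun j : Fin ρ => c j.succ) = 0 := by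
    apply Matrix.eq_zero_of_mulVec_eq_zero (hb.ne_zero)
    funext i
    simpa [Matrix.mulVec, dotProduct, mul_comm] using hall i
  have hcsucc : ∀ j : Fin ρ, c j.succ = 0 := fun j => congrFun hv j
  have hc0 : c 0 = 0 := by
    have : c 0 * (d₀ : ℚ) = 0 := by
      have : ∑ j : Fin ρ, c j.succ * m j = 0 := by
        apply Finset.sum_eq_zero; intro j _; rw [hcsucc j, zero_mul]
      linarith [h1, this]
    rcases mul_eq_zero.1 this with h' | h'
    · exact h'
    · exfalso
      have : (1 : ℚ) ≤ (d₀ : ℚ) := by exact_mod_cast hd₀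
      linarith [h']
  intro i
  rcases Fin.eq_zero_or_eq_succ i with h | ⟨j, hj⟩
  · rw [h]; exact hc0
  · rw [hj]; exact hcsucc j
end
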